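/- arXiv:1805.07670 — 14 statements merged into one kernel-verified Lean document; each statement's English description precedes it below -/
import Mathlib

section
/- Any set of generators for the category of quivers (functors from the walking parallel pair category to Set) must contain at least two non-isomorphic objects. -/
open CategoryTheory Limits

/-- Edgeless quiver with vertex set `Bool`. -/
def edgelessBool : WalkingParallelPair ⥤ Type :=
  parallelPair (TypeCat.ofHom (Empty.elim : Empty → Bool)) (TypeCat.ofHom Empty.elim)

/-- Quiver with one vertex and one loop. -/
def oneLoop : WalkingParallelPair ⥤ Type :=
  parallelPair (TypeCat.ofHom (fun _ : Unit => Unit.unit)) (TypeCat.ofHom (fun _ => Unit.unit))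

/-- Quiver with one vertex and two loops. -/
def twoLoops : WalkingParallelPair ⥤ Type :=
  parallelPair (TypeCat.ofHom (fun _ : Bool => Unit.unit)) (TypeCat.ofHom (fun _ => Unit.unit))

def swapHom : edgelessBool ⟶ edgelessBool :=
  parallelPairHom _ _ _ _ (𝟙 _) (TypeCat.ofHom Bool.not) (by ext x; exact x.elim) (by ext x; exact x.elim)

def pick (b : Bool) : oneLoop ⟶ twoLoops :=
  parallelPairHom _ _ _ _ (TypeCat.ofHom (fun _ => b)) (TypeCat.ofHom (fun _ => Unit.unit)) rfl rfl

/-- The category of quivers is the functor category `WalkingParallelPair ⥤ Type`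
(two parallel arrows `s, t : 1 → 0`).  Any separating family (family of generators)
for this category must contain at least two non-isomorphic objects. -/
theorem generation_of_quivers (J : Set (WalkingParallelPair ⥤ Type))
    (hJ : ObjectProperty.IsSeparating J) :
    ∃ G₁ ∈ J, ∃ G₂ ∈ J, ¬ Nonempty (G₁ ≅ G₂) := by
  -- find an edgeless member
  have h1 : ¬ (𝟙 edgelessBool = swapHom) := by
    intro h
    have := congrArg (fun (φ : edgelessBool ⟶ edgelessBool) => φ.app .one true) h
    simp [swapHom, edgelessBool, parallelPairHom] at this
    exact absurd (this : true = false) (by decide)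
  have h2 : ¬ (pick true = pick false) := by
    intro h
    have := congrArg (fun (φ : oneLoop ⟶ twoLoops) => φ.app .zero Unit.unit) h
    simp [pick, parallelPairHom] at this
  obtain ⟨G₁, hG₁J, f₁, hf₁⟩ : ∃ G ∈ J, ∃ h : G ⟶ edgelessBool,
      ¬ (h ≫ 𝟙 edgelessBool = h ≫ swapHom) := by
    by_contra hc
    push_neg at hc
    exact h1 (hJ _ _ fun G hG h => hc G hG h)
  obtain ⟨G₂, hG₂J, f₂, hf₂⟩ : ∃ G ∈ J, ∃ h : G ⟶ oneLoop,
      ¬ (h ≫ pick true = h ≫ pick false) := by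
    by_contra hc
    push_neg at hc
    exact h2 (hJ _ _ fun G hG h => hc G hG h)
  -- G₁ has no edges
  have hempty : IsEmpty (G₁.obj .zero) := ⟨fun e => Empty.elim (show Empty from f₁.app .zero e)⟩
  -- G₂ has an edge
  have hne : Nonempty (G₂.obj .zero) := by
    by_contra hn
    apply hf₂
    ext j x
    cases j
    · exact absurd ⟨x⟩ hn
    · exact Subsingleton.elim (α := Unit) _ _
  refine ⟨G₁, hG₁J, G₂, hG₂J, fun ⟨i⟩ => ?_⟩
  exact hempty.elim (i.inv.app .zero hne.some)
end

section
/- In the category H of set-system hypergraphs, a morphism φ : G → H is a monomorphism if and only if both its vertex component V(φ) and its edge component E(φ) are injective functions. -/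
open CategoryTheory

/-- A set-system hypergraph: vertex set, edge set, and an endpoint map into the power set. -/
structure SSHyp : Type 1 where
  V : Type
  E : Type
  ε : E → Set V

/-- A morphism of set-system hypergraphs: vertex and edge maps such that the endpoint
set of the image edge is the image of the endpoint set. -/
structure SSHom (G H : SSHyp) where
  vmap : G.V → H.V
  emap : G.E → H.E
  comm : ∀ e, H.ε (emap e) = vmap '' G.ε e

theorem SSHom.ext' {G H : SSHyp} {f g : SSHom G H}
    (hv : f.vmap = g.vmap) (he : f.emap = g.emap) : f = g := by
  cases f; cases g; cases hv; cases he; rfl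

instance : Category SSHyp where
  Hom := SSHom
  id G := ⟨id, id, fun e => by simp⟩
  comp f g := ⟨g.vmap ∘ f.vmap, g.emap ∘ f.emap,
    fun e => by simp [g.comm, f.comm, Set.image_image]⟩
  id_comp f := SSHom.ext' rfl rfl
  comp_id f := SSHom.ext' rfl rfl
  assoc f g h := SSHom.ext' rfl rfl

/-- In the category of set-system hypergraphs, a morphism is a monomorphism iff
both its vertex component and its edge component are injective. -/
theorem mono_iff_injective {G H : SSHyp} (φ : G ⟶ H) :
    Mono φ ↔ Function.Injective φ.vmap ∧ Function.Injective φ.emap := by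
  constructor
  · intro hm
    have hv : Function.Injective φ.vmap := by
      intro v₁ v₂ hvv
      let K : SSHyp := ⟨PUnit, Empty, Empty.elim⟩
      let ψ₁ : K ⟶ G := ⟨fun _ => v₁, Empty.elim, fun e => e.elim⟩
      let ψ₂ : K ⟶ G := ⟨fun _ => v₂, Empty.elim, fun e => e.elim⟩
      have : ψ₁ ≫ φ = ψ₂ ≫ φ := SSHom.ext' (funext fun _ => hvv) (funext fun e => e.elim)
      have h := hm.right_cancellation ψ₁ ψ₂ this
      exact congrArg (fun ψ : K ⟶ G => ψ.vmap PUnit.unit) h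
    refine ⟨hv, ?_⟩
    intro e₁ e₂ hee
    have hε : G.ε e₁ = G.ε e₂ := by
      have h1 : φ.vmap '' G.ε e₁ = φ.vmap '' G.ε e₂ := by
        rw [← φ.comm, ← φ.comm, hee]
      exact Set.image_injective.mpr hv h1
    let K : SSHyp := ⟨G.V, PUnit, fun _ => G.ε e₁⟩
    let ψ₁ : K ⟶ G := ⟨id, fun _ => e₁, fun _ => by simp [K]⟩
    let ψ₂ : K ⟶ G := ⟨id, fun _ => e₂, fun _ => by simp [K, hε]⟩
    have : ψ₁ ≫ φ = ψ₂ ≫ φ := SSHom.ext' rfl (funext fun _ => hee)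
    have h := hm.right_cancellation ψ₁ ψ₂ this
    exact congrArg (fun ψ : K ⟶ G => ψ.emap PUnit.unit) h
  · rintro ⟨hv, he⟩
    refine ⟨fun {K} ψ₁ ψ₂ h => ?_⟩
    refine SSHom.ext' (funext fun v => hv ?_) (funext fun e => he ?_)
    · exact congrFun (congrArg (SSHom.vmap) h) v
    · exact congrFun (congrArg (SSHom.emap) h) e
end

section
/- In the category H of set-system hypergraphs, a morphism φ : G → H is an epimorphism if and only if both its vertex component V(φ) and its edge component E(φ) are surjective functions. -/
open CategoryTheory

/-- In the category of set-system hypergraphs, a morphism is an epimorphism iff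
both its vertex component and its edge component are surjective. -/
theorem epi_iff_surjective {G H : SSHyp} (φ : G ⟶ H) :
    Epi φ ↔ Function.Surjective φ.vmap ∧ Function.Surjective φ.emap := by
  constructor
  · intro hepi
    -- First: edge surjectivity.
    have he : Function.Surjective φ.emap := by
      let K : SSHyp := ⟨H.V, H.E × Prop, fun p => H.ε p.1⟩
      let ψ₁ : H ⟶ K := ⟨id, fun e => (e, True), fun e => by simp [K]⟩
      let ψ₂ : H ⟶ K := ⟨id, fun e => (e, e ∈ Set.range φ.emap), fun e => by simp [K]⟩
      have hc : φ ≫ ψ₁ = φ ≫ ψ₂ := by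
        show @Eq (SSHom G K) (φ ≫ ψ₁) (φ ≫ ψ₂)
        refine SSHom.ext' rfl ?_
        funext g
        show (φ.emap g, True) = (φ.emap g, φ.emap g ∈ Set.range φ.emap)
        exact Prod.ext rfl (propext (by simp [Set.mem_range_self g]))
      have heq : ψ₁ = ψ₂ := (cancel_epi φ).mp hc
      intro e
      have h2 : ψ₁.emap e = ψ₂.emap e := by rw [heq]
      have h3 : True = (e ∈ Set.range φ.emap) := congrArg Prod.snd h2
      exact of_eq_true h3.symm
    -- every vertex lying in an edge of H is in the range of φ.vmap
    have hedge : ∀ (e : H.E) (v : H.V), v ∈ H.ε e → v ∈ Set.range φ.vmap := by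
      intro e v hv
      obtain ⟨e₀, rfl⟩ := he e
      rw [φ.comm] at hv
      obtain ⟨w, _, rfl⟩ := hv
      exact ⟨w, rfl⟩
    -- Now: vertex surjectivity.
    have hvs : Function.Surjective φ.vmap := by
      let K : SSHyp := ⟨H.V × Prop, H.E,
        fun e => (fun v => (v, v ∈ Set.range φ.vmap)) '' H.ε e⟩
      let ψ₂ : H ⟶ K := ⟨fun v => (v, v ∈ Set.range φ.vmap), id, fun e => rfl⟩
      let ψ₁ : H ⟶ K := ⟨fun v => (v, True), id, fun e => by
        show (fun v => (v, v ∈ Set.range φ.vmap)) '' H.ε e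
            = (fun v => ((v : H.V), True)) '' H.ε e
        apply Set.image_congr
        intro v hv
        exact Prod.ext rfl (propext (by simp [hedge e v hv]))⟩
      have hc : φ ≫ ψ₁ = φ ≫ ψ₂ := by
        show @Eq (SSHom G K) (φ ≫ ψ₁) (φ ≫ ψ₂)
        refine SSHom.ext' ?_ rfl
        funext g
        show (φ.vmap g, True) = (φ.vmap g, φ.vmap g ∈ Set.range φ.vmap)
        exact Prod.ext rfl (propext (by simp [Set.mem_range_self g]))
      have heq : ψ₁ = ψ₂ := (cancel_epi φ).mp hc
      intro v
      have h2 : ψ₁.vmap v = ψ₂.vmap v := by rw [heq]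
      have h3 : True = (v ∈ Set.range φ.vmap) := congrArg Prod.snd h2
      exact of_eq_true h3.symm
    exact ⟨hvs, he⟩
  · rintro ⟨hv, he⟩
    refine ⟨fun {Z} ψ₁ ψ₂ h => ?_⟩
    apply SSHom.ext'
    · funext x
      obtain ⟨g, rfl⟩ := hv x
      exact congrFun (congrArg SSHom.vmap h) g
    · funext x
      obtain ⟨g, rfl⟩ := he x
      exact congrFun (congrArg SSHom.emap h) g
end

section
/- The edge functor E : H → Set admits a right adjoint E^⋆, where E^⋆(X) is the hypergraph with vertex set {1}, edge set {0,1} × X, and endpoint map sending (0,x) to ∅ and (1,x) to {1}; the counit at X sends (n,x) to x. Concretely: for every hypergraph G and function ξ : E(G) → X there is a unique morphism ξ̂ : G → E^⋆(X) with ζ_X ∘ E(ξ̂) = ξ. -/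
open CategoryTheory

/-- `E^⋆(X)`: vertex set `{1}`, edge set `{0,1} × X`, with endpoint map sending
`(0,x)` to `∅` and `(1,x)` to `{1}`. -/
def EstarH (X : Type) : SSHyp :=
  ⟨PUnit, Fin 2 × X, fun p => if p.1 = 1 then {PUnit.unit} else ∅⟩

/-- The counit `ζ_X : E(E^⋆(X)) → X`, `(n,x) ↦ x`. -/
def ζ (X : Type) : (EstarH X).E → X := fun p => p.2

/-- The edge functor `E : H → Set` admits `E^⋆` as a right adjoint: for every
hypergraph `G` and function `ξ : E(G) → X` there is a unique morphism
`ξ̂ : G ⟶ E^⋆(X)` with `ζ_X ∘ E(ξ̂) = ξ`. -/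
theorem edge_right_adjoint (G : SSHyp) (X : Type) (ξ : G.E → X) :
    ∃! φ : G ⟶ EstarH X, ζ X ∘ φ.emap = ξ := by
  classical
  refine ⟨⟨fun _ => PUnit.unit, fun e => (if (G.ε e).Nonempty then 1 else 0, ξ e), ?_⟩, ?_, ?_⟩
  · intro e
    by_cases h : (G.ε e).Nonempty
    · simp only [EstarH, h, if_pos]
      obtain ⟨v, hv⟩ := h
      ext u; simp
      exact ⟨v, hv⟩
    · simp only [EstarH, h, if_neg, if_false]
      rw [Set.not_nonempty_iff_eq_empty] at h
      simp [h]
  · rfl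
  · rintro ⟨vmap, emap, comm⟩ hφ
    apply SSHom.ext'
    · funext v; rfl
    · funext e
      have hx : (emap e).2 = ξ e := congrFun hφ e
      have hc := comm e
      have h1 : (emap e).1 = (if (G.ε e).Nonempty then 1 else 0 : Fin 2) := by
        by_cases h : (G.ε e).Nonempty
        · simp only [h, if_pos]
          by_contra hn
          have h0 : (emap e).1 = 0 := by omega
          obtain ⟨v, hv⟩ := h
          have : vmap v ∈ (EstarH X).ε (emap e) := hc ▸ ⟨v, hv, rfl⟩
          simp [EstarH, h0] at this
          exact this
        · simp only [h, if_neg, if_false]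
          rw [Set.not_nonempty_iff_eq_empty] at h
          by_contra hn
          have h1 : (emap e).1 = 1 := by omega
          have : PUnit.unit ∈ (EstarH X).ε (emap e) := by simp [EstarH, h1]; exact rfl
          rw [hc, h] at this
          simp at this
          exact this
      exact Prod.ext h1 hx
end

section
/- The category H of set-system hypergraphs is not cartesian closed: for P₁ the hypergraph with two vertices v, w and a single edge with endpoints {v,w}, the functor P₁ × − fails to preserve the coequalizer of the two maps from the single-vertex edgeless hypergraph to P₁ picking out v and w respectively. -/
open CategoryTheory

open Limits

/-- `P₁`: two vertices and a single edge whose endpoint set is both vertices. -/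
def P1H : SSHyp := ⟨Bool, PUnit, fun _ => Set.univ⟩

/-- The single-vertex, edgeless hypergraph. -/
def V1H : SSHyp := ⟨PUnit, PEmpty, PEmpty.elim⟩

/-- The map picking out the vertex `v = false` of `P₁`. -/
def αH : V1H ⟶ P1H := ⟨fun _ => false, PEmpty.elim, fun e => e.elim⟩

/-- The map picking out the vertex `w = true` of `P₁`. -/
def βH : V1H ⟶ P1H := ⟨fun _ => true, PEmpty.elim, fun e => e.elim⟩

/-! ### Auxiliary constructions -/

/-- The coequalizer of `αH` and `βH`: one vertex, one edge with endpoint the vertex. -/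
def QH : SSHyp := ⟨PUnit, PUnit, fun _ => Set.univ⟩

instance : Subsingleton QH.V := inferInstanceAs (Subsingleton PUnit)
instance : Subsingleton QH.E := inferInstanceAs (Subsingleton PUnit)
instance : Subsingleton P1H.E := inferInstanceAs (Subsingleton PUnit)

theorem hom_to_QH_eq {G : SSHyp} (u v : G ⟶ QH) : u = v :=
  SSHom.ext' (funext fun _ => Subsingleton.elim _ _) (funext fun _ => Subsingleton.elim _ _)

/-- The coequalizer projection. -/
def qH : P1H ⟶ QH :=
  ⟨fun _ => PUnit.unit, fun _ => PUnit.unit, fun _ => by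
    ext x
    constructor
    · intro _
      exact ⟨false, trivial, Subsingleton.elim _ _⟩
    · intro _
      trivial⟩

theorem hqH : αH ≫ qH = βH ≫ qH :=
  SSHom.ext' (funext fun _ => rfl) (funext fun e => e.elim)

theorem vmap_eq_of_cofork (s : Cofork αH βH) : s.π.vmap false = s.π.vmap true :=
  congrFun (congrArg SSHom.vmap s.condition) PUnit.unit

/-- The descent morphism out of `QH`. -/
def descQ (s : Cofork αH βH) : QH ⟶ s.pt :=
  ⟨fun _ => s.π.vmap false, fun _ => s.π.emap PUnit.unit, fun _ => by
    refine (s.π.comm PUnit.unit).trans ?_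
    ext x
    constructor
    · rintro ⟨b, -, rfl⟩
      cases b
      · exact ⟨PUnit.unit, trivial, rfl⟩
      · exact ⟨PUnit.unit, trivial, vmap_eq_of_cofork s⟩
    · rintro ⟨u, -, rfl⟩
      exact ⟨false, trivial, rfl⟩⟩

/-- The cofork on `qH` is a colimit. -/
def hQcolim : IsColimit (Cofork.ofπ qH hqH) := by
  refine Cofork.IsColimit.mk _ (fun s => descQ s) (fun s => ?_) (fun s m hm => ?_)
  · refine SSHom.ext' (funext fun b => ?_) (funext fun e => rfl)
    cases b
    · rfl
    · exact vmap_eq_of_cofork s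
  · refine SSHom.ext' (funext fun u => ?_) (funext fun e => ?_)
    · exact congrFun (congrArg SSHom.vmap hm) false
    · exact congrFun (congrArg SSHom.emap hm) PUnit.unit

/-- Edges of the concrete product `P₁ × P₁`. -/
def BEdge : Type :=
  {S : Set (Bool × Bool) // Prod.fst '' S = Set.univ ∧ Prod.snd '' S = Set.univ}

/-- The concrete product `P₁ × P₁`. -/
def BH : SSHyp := ⟨Bool × Bool, BEdge, fun S => S.1⟩

/-- First projection. -/
def pB1 : BH ⟶ P1H := ⟨Prod.fst, fun _ => PUnit.unit, fun S => S.2.1.symm⟩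

/-- Second projection. -/
def pB2 : BH ⟶ P1H := ⟨Prod.snd, fun _ => PUnit.unit, fun S => S.2.2.symm⟩

/-- Lift into the concrete product. -/
def liftB (s : BinaryFan P1H P1H) : s.pt ⟶ BH where
  vmap x := (s.fst.vmap x, s.snd.vmap x)
  emap e := ⟨(fun x => (s.fst.vmap x, s.snd.vmap x)) '' s.pt.ε e, by
    constructor
    · rw [Set.image_image]
      exact (s.fst.comm e).symm
    · rw [Set.image_image]
      exact (s.snd.comm e).symm⟩
  comm e := rfl

/-- The concrete product cone is a limit. -/
def hBlim : IsLimit (BinaryFan.mk pB1 pB2) := by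
  refine BinaryFan.isLimitMk liftB (fun s => ?_) (fun s => ?_) (fun s m h1 h2 => ?_)
  · exact SSHom.ext' rfl (funext fun e => Subsingleton.elim _ _)
  · exact SSHom.ext' rfl (funext fun e => Subsingleton.elim _ _)
  · have hv : m.vmap = fun x => (s.fst.vmap x, s.snd.vmap x) := by
      funext x
      exact Prod.ext (congrFun (congrArg SSHom.vmap h1) x)
        (congrFun (congrArg SSHom.vmap h2) x)
    refine SSHom.ext' hv (funext fun e => Subtype.ext ?_)
    have hc := m.comm e
    rw [hv] at hc
    exact hc

/-- The test hypergraph: one vertex, `Prop`-many edges, each with endpoint the vertex. -/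
def XH : SSHyp := ⟨PUnit, Prop, fun _ => Set.univ⟩

instance : Subsingleton XH.V := inferInstanceAs (Subsingleton PUnit)

/-- The edge-separating morphism out of the concrete product. -/
def sconc : BH ⟶ XH :=
  ⟨fun _ => PUnit.unit, fun S => S.1 = Set.univ, fun S => by
    have hne : ∃ p, p ∈ S.1 := by
      have h : (false : Bool) ∈ Prod.fst '' S.1 := by rw [S.2.1]; trivial
      obtain ⟨p, hp, -⟩ := h
      exact ⟨p, hp⟩
    ext x
    constructor
    · intro _
      obtain ⟨p, hp⟩ := hne
      exact ⟨p, hp, Subsingleton.elim _ _⟩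
    · intro _
      trivial⟩

def S1E : BEdge :=
  ⟨Set.univ, by
    constructor <;> (ext b; exact ⟨fun _ => trivial, fun _ => ⟨(b, b), trivial, rfl⟩⟩)⟩

def S2E : BEdge :=
  ⟨{p | p.1 = p.2}, by
    constructor <;> (ext b; exact ⟨fun _ => trivial, fun _ => ⟨(b, b), rfl, rfl⟩⟩)⟩

theorem keyH [CartesianMonoidalCategory SSHyp] :
    ¬ Nonempty (PreservesColimit (parallelPair αH βH) (prod.functor.obj P1H)) := by
  rintro ⟨hpres⟩
  haveI := hpres
  have hc : IsColimit ((prod.functor.obj P1H).mapCocone (Cofork.ofπ qH hqH)) :=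
    isColimitOfPreserves _ hQcolim
  set F : WalkingParallelPair ⥤ SSHyp := parallelPair αH βH ⋙ prod.functor.obj P1H with hF
  -- any two morphisms out of `P₁ ⨯ V1` into `XH` agree
  have hkey : ∀ u v : F.obj WalkingParallelPair.zero ⟶ XH, u = v := by
    intro u v
    refine SSHom.ext' (funext fun x => Subsingleton.elim _ _) (funext fun e => ?_)
    exact ((prod.snd : P1H ⨯ V1H ⟶ V1H).emap e).elim
  -- the comparison isomorphism between `BH` and the chosen `P₁ ⨯ P₁`
  set φhom : BH ⟶ P1H ⨯ P1H := prod.lift pB1 pB2 with hφhom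
  set φinv : P1H ⨯ P1H ⟶ BH := hBlim.lift (BinaryFan.mk prod.fst prod.snd) with hφinv
  have hfac1 : φinv ≫ pB1 = prod.fst := hBlim.fac (BinaryFan.mk prod.fst prod.snd) ⟨WalkingPair.left⟩
  have hfac2 : φinv ≫ pB2 = prod.snd := hBlim.fac (BinaryFan.mk prod.fst prod.snd) ⟨WalkingPair.right⟩
  have hφ : φhom ≫ φinv = 𝟙 BH := by
    apply hBlim.hom_ext
    rintro ⟨⟨⟩⟩
    · show (φhom ≫ φinv) ≫ pB1 = 𝟙 BH ≫ pB1
      rw [Category.assoc, hfac1, Category.id_comp, hφhom, prod.lift_fst]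
    · show (φhom ≫ φinv) ≫ pB2 = 𝟙 BH ≫ pB2
      rw [Category.assoc, hfac2, Category.id_comp, hφhom, prod.lift_snd]
  set k : P1H ⨯ P1H ⟶ XH := φinv ≫ sconc with hk
  -- a cocone over the mapped diagram with point `XH`
  let s : Cocone F :=
    { pt := XH
      ι :=
        { app := fun j =>
            match j with
            | WalkingParallelPair.zero => F.map WalkingParallelPairHom.left ≫ k
            | WalkingParallelPair.one => k
          naturality := by
            rintro _ _ f
            change WalkingParallelPairHom _ _ at f
            cases f with
            | left => simp
            | right =>
                simp only [Functor.const_obj_obj, Functor.const_obj_map, Category.comp_id]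
                exact hkey _ _
            | id => simp } }
  have hπ : (prod.functor.obj P1H).map qH ≫ hc.desc s = k := hc.fac s WalkingParallelPair.one
  have hcomm : φhom ≫ (prod.functor.obj P1H).map qH = pB1 ≫ prod.lift (𝟙 P1H) qH := by
    apply Limits.prod.hom_ext
    · show (φhom ≫ prod.map (𝟙 P1H) qH) ≫ prod.fst = (pB1 ≫ prod.lift (𝟙 P1H) qH) ≫ prod.fst
      rw [Category.assoc, Category.assoc, prod.map_fst, prod.lift_fst,
        Category.comp_id, hφhom, prod.lift_fst, Category.comp_id]
    · exact hom_to_QH_eq _ _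
  have hchain : sconc = pB1 ≫ (prod.lift (𝟙 P1H) qH ≫ hc.desc s) := by
    calc sconc = (φhom ≫ φinv) ≫ sconc := by rw [hφ, Category.id_comp]
    _ = φhom ≫ k := by rw [Category.assoc, hk]
    _ = φhom ≫ (prod.functor.obj P1H).map qH ≫ hc.desc s := by exact congrArg (fun x => φhom ≫ x) hπ.symm
    _ = (φhom ≫ (prod.functor.obj P1H).map qH) ≫ hc.desc s := by exact (Category.assoc _ _ _).symm
    _ = (pB1 ≫ prod.lift (𝟙 P1H) qH) ≫ hc.desc s := by exact congrArg (fun x => x ≫ hc.desc s) hcomm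
    _ = pB1 ≫ (prod.lift (𝟙 P1H) qH ≫ hc.desc s) := by exact Category.assoc _ _ _
  have hemap := congrArg SSHom.emap hchain
  have h1 : sconc.emap S1E = (prod.lift (𝟙 P1H) qH ≫ hc.desc s).emap PUnit.unit :=
    congrFun hemap S1E
  have h2 : sconc.emap S2E = (prod.lift (𝟙 P1H) qH ≫ hc.desc s).emap PUnit.unit :=
    congrFun hemap S2E
  have hPP : (S1E.1 = Set.univ) = (S2E.1 = Set.univ) := h1.trans h2.symm
  have hdiag : S2E.1 = Set.univ := hPP ▸ rfl
  have hmem : ((false : Bool), (true : Bool)) ∈ S2E.1 := by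
    rw [hdiag]
    trivial
  exact absurd hmem (by simp [S2E])

/-- The comparison between the monoidal product functor and the categorical product functor. -/
noncomputable def tensorIsoProd [CartesianMonoidalCategory SSHyp] :
    MonoidalCategory.tensorLeft P1H ≅ prod.functor.obj P1H := by
  refine NatIso.ofComponents (fun Y => ?_) (fun {Y Z} f => ?_)
  · exact
      { hom := prod.lift (CartesianMonoidalCategory.fst P1H Y) (CartesianMonoidalCategory.snd P1H Y)
        inv := CartesianMonoidalCategory.lift prod.fst prod.snd
        hom_inv_id := by
          apply CartesianMonoidalCategory.hom_ext
          · simp [prod.functor, CartesianMonoidalCategory.lift_fst, CartesianMonoidalCategory.lift_snd]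
            exact prod.lift_fst _ _
          · simp [prod.functor, CartesianMonoidalCategory.lift_fst, CartesianMonoidalCategory.lift_snd]
            exact prod.lift_snd _ _
        inv_hom_id := by
          apply Limits.prod.hom_ext <;>
            simp [prod.functor, CartesianMonoidalCategory.lift_fst, CartesianMonoidalCategory.lift_snd] }
  · apply Limits.prod.hom_ext <;>
      simp [prod.functor, CartesianMonoidalCategory.whiskerLeft_fst, CartesianMonoidalCategory.whiskerLeft_snd]

/-- The category of set-system hypergraphs is not cartesian closed: indeed, the
functor `P₁ × -` fails to preserve the coequalizer of the two vertex-picking maps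
`α, β : V1 ⟶ P₁`. -/
theorem not_cartesian_closed [CartesianMonoidalCategory SSHyp] :
    IsEmpty (MonoidalClosed SSHyp) ∧
      ¬ Nonempty (PreservesColimit (parallelPair αH βH) (prod.functor.obj P1H)) := by
  refine ⟨⟨fun cc => ?_⟩, keyH⟩
  haveI := cc
  haveI : PreservesColimit (parallelPair αH βH) (MonoidalCategory.tensorLeft P1H) :=
    inferInstance
  exact keyH ⟨preservesColimit_of_natIso _ tensorIsoProd⟩
end

section
/- A set-system hypergraph P is projective (with respect to epimorphisms) in the category H if and only if every edge of P has empty endpoint set, i.e. ε_P(e) = ∅ for all e ∈ E(P). -/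
open CategoryTheory

section Aux

open Classical in
/-- An epimorphism is surjective on vertices. -/
lemma epi_vsurj {G H : SSHyp} (φ : G ⟶ H) [Epi φ] : Function.Surjective φ.vmap := by
  by_contra hns
  simp only [Function.Surjective, not_forall] at hns
  obtain ⟨v0, hv0⟩ := hns
  rw [not_exists] at hv0
  -- build target hypergraph
  let a : H.V → Option H.V := fun v => some v
  let b : H.V → Option H.V := fun v => if v = v0 then none else some v
  let r : H.E × Bool → H.E × Bool → Prop := fun p q => p.1 = q.1 ∧ v0 ∉ H.ε p.1
  let εK : H.E × Bool → Set (Option H.V) := fun p => (if p.2 then a else b) '' H.ε p.1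
  have hεK : ∀ p q, r p q → εK p = εK q := by
    rintro ⟨e, x⟩ ⟨e', y⟩ ⟨h1, h2⟩
    subst h1
    have : ∀ (f g : H.V → Option H.V), (∀ v ∈ H.ε e, f v = g v) → f '' H.ε e = g '' H.ε e := by
      intro f g h
      ext w
      constructor <;> rintro ⟨v, hv, rfl⟩ <;> exact ⟨v, hv, by rw [h v hv]⟩
    have hab : ∀ v ∈ H.ε e, a v = b v := by
      intro v hv
      have : v ≠ v0 := fun hh => h2 (hh ▸ hv)
      simp [a, b, this]
    simp only [εK]
    rcases x <;> rcases y <;>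
      simp only [Bool.false_eq_true, if_true, if_false, ite_true, ite_false] <;>
      first
        | rfl
        | exact this a b hab
        | exact this b a (fun v hv => (hab v hv).symm)
  let K : SSHyp := ⟨Option H.V, Quot r, Quot.lift εK hεK⟩
  let g₁ : H ⟶ K := ⟨a, fun e => Quot.mk r (e, true), fun e => rfl⟩
  let g₂ : H ⟶ K := ⟨b, fun e => Quot.mk r (e, false), fun e => rfl⟩
  have key : φ ≫ g₁ = φ ≫ g₂ := by
    apply SSHom.ext'
    · funext w
      show a (φ.vmap w) = b (φ.vmap w)
      have : φ.vmap w ≠ v0 := fun h => hv0 w h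
      simp [a, b, this]
    · funext e
      show Quot.mk r (φ.emap e, true) = Quot.mk r (φ.emap e, false)
      apply Quot.sound
      refine ⟨rfl, ?_⟩
      rw [φ.comm]
      rintro ⟨w, _, hw⟩
      exact hv0 w hw
  have : g₁ = g₂ := (cancel_epi φ).mp key
  have h1 : a v0 = b v0 := congrFun (congrArg SSHom.vmap this) v0
  simp [a, b] at h1

open Classical in
/-- An epimorphism is surjective on edges. -/
lemma epi_esurj {G H : SSHyp} (φ : G ⟶ H) [Epi φ] : Function.Surjective φ.emap := by
  by_contra hns
  simp only [Function.Surjective, not_forall] at hns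
  obtain ⟨e0, he0⟩ := hns
  rw [not_exists] at he0
  let εK : Option H.E → Set H.V := fun e => match e with
    | some e => H.ε e
    | none => H.ε e0
  let K : SSHyp := ⟨H.V, Option H.E, εK⟩
  let g₁ : H ⟶ K := ⟨id, fun e => some e, fun e => by simp [K, εK]⟩
  let g₂ : H ⟶ K := ⟨id, fun e => if e = e0 then none else some e,
    fun e => by by_cases h : e = e0 <;> simp [K, εK, h]⟩
  have key : φ ≫ g₁ = φ ≫ g₂ := by
    apply SSHom.ext'
    · rfl
    · funext e
      show some (φ.emap e) = if φ.emap e = e0 then none else some (φ.emap e)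
      have : φ.emap e ≠ e0 := fun h => he0 e h
      simp [this]
  have : g₁ = g₂ := (cancel_epi φ).mp key
  have h1 : some e0 = (if e0 = e0 then none else some e0) :=
    congrFun (congrArg SSHom.emap this) e0
  simp at h1

/-- Componentwise surjective morphisms are epimorphisms. -/
lemma epi_of_surj {G H : SSHyp} (φ : G ⟶ H) (hv : Function.Surjective φ.vmap)
    (he : Function.Surjective φ.emap) : Epi φ := by
  constructor
  intro Z g h hgh
  apply SSHom.ext'
  · funext v
    obtain ⟨w, rfl⟩ := hv v
    exact congrFun (congrArg SSHom.vmap hgh) w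
  · funext e
    obtain ⟨f, rfl⟩ := he e
    exact congrFun (congrArg SSHom.emap hgh) f

end Aux

/-- A set-system hypergraph is projective (with respect to epimorphisms) if and only
if every edge has empty endpoint set. -/
theorem projective_iff_edges_empty (P : SSHyp) :
    Projective P ↔ ∀ e : P.E, P.ε e = ∅ := by
  constructor
  · intro hP e0
    by_contra hne
    obtain ⟨v0, hv0⟩ := Set.nonempty_iff_ne_empty.mpr hne
    -- the doubled-vertex cover of P
    let G : SSHyp := ⟨P.V × Bool, P.E, fun e => {p | p.1 ∈ P.ε e}⟩
    let φ : G ⟶ P := ⟨Prod.fst, id, fun e => by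
      ext v
      constructor
      · intro hv; exact ⟨(v, true), hv, rfl⟩
      · rintro ⟨p, hp, rfl⟩; exact hp⟩
    have : Epi φ := epi_of_surj φ (fun v => ⟨(v, true), rfl⟩) (fun e => ⟨e, rfl⟩)
    obtain ⟨s, hs⟩ := hP.factors (𝟙 P) φ
    have hsv : ∀ v, (s.vmap v).1 = v := fun v =>
      congrFun (congrArg SSHom.vmap hs) v
    have hse : ∀ e, s.emap e = e := fun e =>
      congrFun (congrArg SSHom.emap hs) e
    have hc : G.ε e0 = s.vmap '' P.ε e0 := by
      have := s.comm e0
      rwa [hse e0] at this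
    have hmem : ∀ b : Bool, s.vmap v0 = (v0, b) := by
      intro b
      have : (v0, b) ∈ G.ε e0 := hv0
      rw [hc] at this
      obtain ⟨w, hw, hweq⟩ := this
      have : w = v0 := by
        have := hsv w
        rw [hweq] at this
        exact this.symm
      rw [← hweq, this]
    have := (hmem true).symm.trans (hmem false)
    have h2 : ((v0, true) : P.V × Bool) = (v0, false) := this
    simp at h2
  · intro hemp
    constructor
    intro E X f e he
    have hv := epi_vsurj e
    have hee := epi_esurj e
    refine ⟨⟨fun v => Classical.choose (hv (f.vmap v)),
      fun e' => Classical.choose (hee (f.emap e')), ?_⟩, ?_⟩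
    · intro e'
      have h1 : X.ε (e.emap (Classical.choose (hee (f.emap e')))) = X.ε (f.emap e') := by
        rw [Classical.choose_spec (hee (f.emap e'))]
      have h2 : X.ε (f.emap e') = ∅ := by
        rw [f.comm, hemp e', Set.image_empty]
      have h3 : e.vmap '' E.ε (Classical.choose (hee (f.emap e'))) = ∅ := by
        rw [← e.comm, h1, h2]
      rw [Set.image_eq_empty] at h3
      rw [h3, hemp e', Set.image_empty]
    · apply SSHom.ext'
      · funext v
        exact Classical.choose_spec (hv (f.vmap v))
      · funext e'
        exact Classical.choose_spec (hee (f.emap e'))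
end

section
/- No set (as opposed to proper class) of objects of the category H of set-system hypergraphs forms a family of generators for H. -/
open CategoryTheory

/-- No set-indexed family of set-system hypergraphs is a family of generators
(a separating family) for the category of set-system hypergraphs. -/
theorem no_set_of_generators (ι : Type) (F : ι → SSHyp) :
    ¬ ObjectProperty.IsSeparating (C := SSHyp) (Set.range F) := by
  intro hsep
  classical
  let S := Σ i, (F i).V
  let H : SSHyp := ⟨Set S, Unit, fun _ => Set.univ⟩
  let K : SSHyp := ⟨Set S, Bool, fun _ => Set.univ⟩
  let φ : H ⟶ K := ⟨id, fun _ => true, fun e => by simp [H, K]⟩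
  let ψ : H ⟶ K := ⟨id, fun _ => false, fun e => by simp [H, K]⟩
  have heq : φ = ψ := by
    apply hsep
    rintro G ⟨i, rfl⟩ h
    apply SSHom.ext'
    · rfl
    · funext e
      exfalso
      have hc := h.comm e
      have hsurj : Function.Surjective h.vmap := by
        intro y
        have hy : y ∈ h.vmap '' (F i).ε e := by
          rw [← hc]; trivial
        obtain ⟨x, _, hx⟩ := hy
        exact ⟨x, hx⟩
      have hne : Nonempty (F i).V := ⟨(hsurj ∅).choose⟩
      let f : S → Set S := fun s =>
        h.vmap (if hj : s.1 = i then hj ▸ s.2 else Classical.arbitrary _)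
      have hf : Function.Surjective f := by
        intro y
        obtain ⟨x, hx⟩ := hsurj y
        exact ⟨⟨i, x⟩, by simp [f, hx]⟩
      exact Function.cantor_surjective f hf
  have : (true : Bool) = false := congrArg (fun m => m.emap ()) heq
  simp at this
end

section
/- The full subcategory M of multigraphs is a coreflective subcategory of the category H of set-system hypergraphs: the deletion functor Del, which removes all edges whose endpoint set does not have cardinality 1 or 2, is right adjoint to the inclusion N : M → H. Precisely, for every multigraph G and morphism φ : N(G) → H in H, there is a unique morphism φ̂ : G → Del(H) in M with j_H ∘ N(φ̂) = φ, where j_H : N(Del(H)) → H is the inclusion. -/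
open CategoryTheory

/-- A set-system hypergraph is a multigraph when every edge has an endpoint set of
cardinality 1 or 2, i.e. of the form `{v, w}`. -/
def IsMG (G : SSHyp) : Prop := ∀ e, ∃ v w : G.V, G.ε e = {v, w}

/-- The category of multigraphs: the full subcategory of set-system hypergraphs on
the multigraphs. -/
abbrev MG := ObjectProperty.FullSubcategory IsMG

/-- The deletion construction: remove all edges whose endpoint set does not have
cardinality 1 or 2. -/
def DelH (H : SSHyp) : SSHyp :=
  ⟨H.V, {e : H.E // ∃ v w : H.V, H.ε e = {v, w}}, fun e => H.ε e.1⟩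

theorem DelH_isMG (H : SSHyp) : IsMG (DelH H) := fun e => e.2

/-- `Del(H)` as a multigraph. -/
def DelM (H : SSHyp) : MG := ⟨DelH H, DelH_isMG H⟩

/-- The canonical inclusion `j_H : Del(H) ⟶ H`. -/
def jH (H : SSHyp) : DelH H ⟶ H :=
  ⟨id, Subtype.val, fun e => by simp [DelH]⟩

/-- The full subcategory of multigraphs is coreflective in set-system hypergraphs:
deletion is right adjoint to the inclusion.  For every multigraph `G` and morphism
`φ : N(G) ⟶ H`, there is a unique multigraph morphism `ψ : G ⟶ Del(H)` with
`j_H ∘ N(ψ) = φ`. -/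
theorem deletion_coreflection (G : MG) (H : SSHyp)
    (φ : (ObjectProperty.ι IsMG).obj G ⟶ H) :
    ∃! ψ : G ⟶ DelM H, (ObjectProperty.ι IsMG).map ψ ≫ jH H = φ := by
  refine ⟨ObjectProperty.homMk ⟨φ.vmap, fun e => ⟨φ.emap e, ?_⟩, fun e => ?_⟩, ?_, ?_⟩
  · obtain ⟨v, w, hvw⟩ := G.2 e
    exact ⟨φ.vmap v, φ.vmap w, by rw [φ.comm]; show φ.vmap '' G.obj.ε e = _; rw [hvw]; simp [Set.image_insert_eq]⟩
  · exact φ.comm e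
  · exact SSHom.ext' rfl rfl
  · rintro ⟨⟨ψv, ψe, ψc⟩⟩ h
    have hv' := congrArg SSHom.vmap h
    have he' := congrArg SSHom.emap h
    change ψv = φ.vmap at hv'
    change Subtype.val ∘ ψe = φ.emap at he'
    apply ObjectProperty.hom_ext
    apply SSHom.ext'
    · show ψv = φ.vmap
      exact hv'
    · funext e
      apply Subtype.ext
      show (ψe e).1 = φ.emap e
      exact congrFun he' e |>.symm ▸ rfl
end

section
/- The underlying-multigraph functor U : Q → M does not preserve binary products: for P⃗₁ the directed path of length 1, U(P⃗₁ × P⃗₁) has four vertices and one edge, while U(P⃗₁) × U(P⃗₁) in M has four vertices and two edges, so they are not isomorphic. -/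
open CategoryTheory

/-- A quiver: a set of vertices, a set of edges, and source/target maps. -/
structure Quiv' : Type 1 where
  V : Type
  E : Type
  s : E → V
  t : E → V

/-- A quiver homomorphism: a vertex map and an edge map commuting with source and target. -/
structure QuivHom (G H : Quiv') where
  vmap : G.V → H.V
  emap : G.E → H.E
  comm_s : ∀ e, H.s (emap e) = vmap (G.s e)
  comm_t : ∀ e, H.t (emap e) = vmap (G.t e)

theorem QuivHom.ext' {G H : Quiv'} {f g : QuivHom G H}
    (hv : f.vmap = g.vmap) (he : f.emap = g.emap) : f = g := by
  cases f; cases g; cases hv; cases he; rfl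

instance : Category Quiv' where
  Hom := QuivHom
  id G := ⟨id, id, fun _ => rfl, fun _ => rfl⟩
  comp f g := ⟨g.vmap ∘ f.vmap, g.emap ∘ f.emap,
    fun e => by simp [g.comm_s, f.comm_s],
    fun e => by simp [g.comm_t, f.comm_t]⟩
  id_comp f := QuivHom.ext' rfl rfl
  comp_id f := QuivHom.ext' rfl rfl
  assoc f g h := QuivHom.ext' rfl rfl


/-- Underlying multigraph of a quiver: `ε(e) = {σ(e), τ(e)}`. -/
def UObj (Q : Quiv') : SSHyp := ⟨Q.V, Q.E, fun e => {Q.s e, Q.t e}⟩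

/-- The underlying-multigraph functor `U : Q ⥤ M`. -/
def Ufun : Quiv' ⥤ MG where
  obj Q := ⟨UObj Q, fun e => ⟨Q.s e, Q.t e, rfl⟩⟩
  map f := ⟨⟨f.vmap, f.emap, fun e => by
    simp [UObj, f.comm_s, f.comm_t, Set.image_insert_eq]
    exact congrArg₂ (fun a b => ({a, b} : Set _)) (f.comm_s e) (f.comm_t e)⟩⟩
  map_id Q := ObjectProperty.hom_ext _ (SSHom.ext' rfl rfl)
  map_comp f g := ObjectProperty.hom_ext _ (SSHom.ext' rfl rfl)


open Limits

/-- The directed path of length 1. -/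
def P1q : Quiv' := ⟨Bool, PUnit, fun _ => false, fun _ => true⟩


instance homP1P1_subsingleton : Subsingleton (P1q ⟶ P1q) := by
  constructor
  intro f g
  apply QuivHom.ext'
  · funext b
    have hf0 := f.comm_s PUnit.unit
    have hg0 := g.comm_s PUnit.unit
    have hf1 := f.comm_t PUnit.unit
    have hg1 := g.comm_t PUnit.unit
    cases b
    · exact hf0.symm.trans hg0
    · exact hf1.symm.trans hg1
  · funext e
    rfl

/-- The test multigraph: a single edge on two vertices. -/
def Tmg : MG := ⟨⟨Bool, Unit, fun _ => {false, true}⟩, fun _ => ⟨false, true, rfl⟩⟩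

/-- The underlying-multigraph functor does not preserve binary products:
`U(P⃗₁ × P⃗₁)` (four vertices, one edge) is not isomorphic to
`U(P⃗₁) × U(P⃗₁)` in the category of multigraphs (four vertices, two edges). -/
theorem U_not_preserve_products [HasBinaryProducts Quiv'] [HasBinaryProducts MG] :
    ¬ Nonempty (Ufun.obj (P1q ⨯ P1q) ≅ Ufun.obj P1q ⨯ Ufun.obj P1q) := by
  rintro ⟨i⟩
  -- An edge of the quiver product
  let d : P1q ⟶ P1q ⨯ P1q := prod.lift (𝟙 _) (𝟙 _)
  let e₀ : (P1q ⨯ P1q).E := d.emap PUnit.unit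
  -- Every edge of the quiver product equals e₀
  have hE : ∀ e : (P1q ⨯ P1q).E, e = e₀ := by
    intro e
    let he : P1q ⟶ P1q ⨯ P1q :=
      ⟨fun b => Bool.rec ((P1q ⨯ P1q).s e) ((P1q ⨯ P1q).t e) b, fun _ => e,
        fun _ => rfl, fun _ => rfl⟩
    have hhe : he = d := by
      apply Limits.prod.hom_ext <;> exact Subsingleton.elim _ _
    exact congrFun (congrArg QuivHom.emap hhe) PUnit.unit
  -- The unique edge is not a loop
  have hst : (P1q ⨯ P1q).s e₀ ≠ (P1q ⨯ P1q).t e₀ := by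
    intro h
    have hs := (prod.fst : P1q ⨯ P1q ⟶ P1q).comm_s e₀
    have ht := (prod.fst : P1q ⨯ P1q ⟶ P1q).comm_t e₀
    have : (false : Bool) = true := by
      calc (false : Bool) = _ := hs
        _ = _ := by rw [h]
        _ = true := ht.symm
    exact Bool.noConfusion this
  -- Two distinct morphisms Tmg ⟶ U(P1q)
  let g₁ : Tmg ⟶ Ufun.obj P1q :=
    ⟨⟨id, fun _ => PUnit.unit, fun e => by simp [Ufun, UObj, Tmg, P1q]⟩⟩
  let g₂ : Tmg ⟶ Ufun.obj P1q :=
    ⟨⟨fun b => !b, fun _ => PUnit.unit, fun e => by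
      show ({P1q.s PUnit.unit, P1q.t PUnit.unit} : Set Bool) = _
      simp [Tmg, P1q, Set.image_pair, Set.pair_comm]
      show ({true, false} : Set Bool) = (fun b : Bool => !b) '' {true, false}
      rw [Set.image_pair]
      simp only [Bool.not_true, Bool.not_false]
      exact Set.pair_comm _ _⟩⟩
  have hg : g₁ ≠ g₂ := by
    intro h
    have := congrFun (congrArg (fun f => f.hom.vmap) h) false
    simp [g₁, g₂] at this
    exact Bool.noConfusion this
  -- Lifted morphisms into U(P1q ⨯ P1q)
  let L : (Tmg ⟶ Ufun.obj P1q) → (Tmg ⟶ Ufun.obj P1q) → (Tmg ⟶ Ufun.obj (P1q ⨯ P1q)) :=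
    fun a b => prod.lift a b ≫ i.inv
  have Lfst : ∀ a b, L a b ≫ i.hom ≫ prod.fst = a := by
    intro a b
    simp [L]
    exact prod.lift_fst _ _
  have Lsnd : ∀ a b, L a b ≫ i.hom ≫ prod.snd = b := by
    intro a b
    simp [L]
    exact prod.lift_snd _ _
  -- Classification of morphisms Tmg ⟶ U(P1q ⨯ P1q)
  have hclass : ∀ k : Tmg ⟶ Ufun.obj (P1q ⨯ P1q),
      (k.hom.vmap false = (P1q ⨯ P1q).s e₀ ∧ k.hom.vmap true = (P1q ⨯ P1q).t e₀) ∨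
      (k.hom.vmap false = (P1q ⨯ P1q).t e₀ ∧ k.hom.vmap true = (P1q ⨯ P1q).s e₀) := by
    intro k
    have hc := k.hom.comm ()
    rw [hE (k.hom.emap ())] at hc
    have hc2 : ({(P1q ⨯ P1q).s e₀, (P1q ⨯ P1q).t e₀} : Set (P1q ⨯ P1q).V)
        = {k.hom.vmap false, k.hom.vmap true} :=
      hc.trans (Set.image_pair k.hom.vmap false true)
    rcases Set.pair_eq_pair_iff.mp hc2 with ⟨h1, h2⟩ | ⟨h1, h2⟩
    · exact Or.inl ⟨h1.symm, h2.symm⟩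
    · exact Or.inr ⟨h2.symm, h1.symm⟩
  -- Morphisms with the same classification are equal
  have huniq : ∀ (k k' : Tmg ⟶ Ufun.obj (P1q ⨯ P1q)),
      k.hom.vmap false = k'.hom.vmap false → k.hom.vmap true = k'.hom.vmap true → k = k' := by
    intro k k' h0 h1
    apply ObjectProperty.hom_ext
    apply SSHom.ext'
    · funext b
      cases b
      · exact h0
      · exact h1
    · funext u
      exact (hE _).trans (hE _).symm
  -- Three pairwise distinct morphisms Tmg ⟶ U(P1q ⨯ P1q)
  let k₁ := L g₁ g₁
  let k₂ := L g₁ g₂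
  let k₃ := L g₂ g₁
  have h12 : k₁ ≠ k₂ := fun h => hg
    (((Lsnd g₁ g₁).symm.trans (congrArg (· ≫ i.hom ≫ prod.snd) h)).trans (Lsnd g₁ g₂))
  have h13 : k₁ ≠ k₃ := fun h => hg
    (((Lfst g₁ g₁).symm.trans (congrArg (· ≫ i.hom ≫ prod.fst) h)).trans (Lfst g₂ g₁))
  have h23 : k₂ ≠ k₃ := fun h => hg
    (((Lfst g₁ g₂).symm.trans (congrArg (· ≫ i.hom ≫ prod.fst) h)).trans (Lfst g₂ g₁))
  -- Pigeonhole: among three morphisms into a two-element class, two coincide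
  rcases hclass k₁ with ⟨a1, b1⟩ | ⟨a1, b1⟩ <;>
    rcases hclass k₂ with ⟨a2, b2⟩ | ⟨a2, b2⟩ <;>
    rcases hclass k₃ with ⟨a3, b3⟩ | ⟨a3, b3⟩
  · exact h12 (huniq k₁ k₂ (a1.trans a2.symm) (b1.trans b2.symm))
  · exact h12 (huniq k₁ k₂ (a1.trans a2.symm) (b1.trans b2.symm))
  · exact h13 (huniq k₁ k₃ (a1.trans a3.symm) (b1.trans b3.symm))
  · exact h23 (huniq k₂ k₃ (a2.trans a3.symm) (b2.trans b3.symm))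
  · exact h23 (huniq k₂ k₃ (a2.trans a3.symm) (b2.trans b3.symm))
  · exact h13 (huniq k₁ k₃ (a1.trans a3.symm) (b1.trans b3.symm))
  · exact h12 (huniq k₁ k₂ (a1.trans a2.symm) (b1.trans b2.symm))
  · exact h12 (huniq k₁ k₂ (a1.trans a2.symm) (b1.trans b2.symm))
end

section
/- Any set of generators for the category R of incidence hypergraphs must contain at least three pairwise non-isomorphic objects. -/
open CategoryTheory Limits

namespace GenIncAux

/-- Two vertices, no edges, no incidences. -/
def Vfun : WalkingSpan ⥤ Type := span (↾(PEmpty.elim : PEmpty → Bool)) (↾(id : PEmpty → PEmpty))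

/-- Two edges, no vertices, no incidences. -/
def Efun : WalkingSpan ⥤ Type := span (↾(id : PEmpty → PEmpty)) (↾(PEmpty.elim : PEmpty → Bool))

/-- One vertex, one edge, two incidences. -/
def Ifun : WalkingSpan ⥤ Type :=
  span (↾(fun _ : Bool => PUnit.unit)) (↾(fun _ : Bool => PUnit.unit))

def Vswap : Vfun ⟶ Vfun where
  app x := match x with
    | none => ↾id
    | some WalkingPair.left => ↾(fun b => !b)
    | some WalkingPair.right => ↾id
  naturality := by
    rintro _ _ (_ | j)
    · rfl
    · ext a; exact a.elim

def Eswap : Efun ⟶ Efun where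
  app x := match x with
    | none => ↾id
    | some WalkingPair.left => ↾id
    | some WalkingPair.right => ↾(fun b => !b)
  naturality := by
    rintro _ _ (_ | j)
    · rfl
    · ext a; exact a.elim

def Iswap : Ifun ⟶ Ifun where
  app x := match x with
    | none => ↾(fun b => !b)
    | some WalkingPair.left => ↾id
    | some WalkingPair.right => ↾id
  naturality := by
    rintro _ _ (_ | j)
    · rfl
    · cases j <;> ext a <;> rfl

lemma Vswap_ne : Vswap ≠ 𝟙 Vfun := by
  intro h
  have := types_congr_hom (congrArg (fun t : Vfun ⟶ Vfun => t.app (some WalkingPair.left)) h) true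
  simp [Vswap, NatTrans.id_app] at this
  exact Bool.false_ne_true this

lemma Eswap_ne : Eswap ≠ 𝟙 Efun := by
  intro h
  have := types_congr_hom (congrArg (fun t : Efun ⟶ Efun => t.app (some WalkingPair.right)) h) true
  simp [Eswap, NatTrans.id_app] at this
  exact Bool.false_ne_true this

lemma Iswap_ne : Iswap ≠ 𝟙 Ifun := by
  intro h
  have := types_congr_hom (congrArg (fun t : Ifun ⟶ Ifun => t.app none) h) true
  simp [Iswap, NatTrans.id_app] at this
  exact Bool.false_ne_true this

end GenIncAux

open GenIncAux

/-- The category of incidence hypergraphs is the functor category `Set^D` where `D`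
is the span shape `0 ← 2 → 1` (realized as `WalkingSpan`, whose central object maps
to the incidence set, with legs to vertices and edges).  Any separating family
(family of generators) must contain at least three pairwise non-isomorphic objects. -/
theorem generation_of_incidence_hypergraphs (J : Set (WalkingSpan ⥤ Type))
    (hJ : ObjectProperty.IsSeparating J) :
    ∃ G₁ ∈ J, ∃ G₂ ∈ J, ∃ G₃ ∈ J,
      ¬ Nonempty (G₁ ≅ G₂) ∧ ¬ Nonempty (G₁ ≅ G₃) ∧ ¬ Nonempty (G₂ ≅ G₃) := by
  -- G₁ : detects the vertex swap
  have h1 : ¬ ∀ G ∈ J, ∀ h : G ⟶ Vfun, h ≫ Vswap = h ≫ 𝟙 Vfun :=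
    fun h => Vswap_ne (hJ Vswap (𝟙 Vfun) h)
  push_neg at h1
  obtain ⟨G₁, hG₁, f₁, hf₁⟩ := h1
  have h2 : ¬ ∀ G ∈ J, ∀ h : G ⟶ Efun, h ≫ Eswap = h ≫ 𝟙 Efun :=
    fun h => Eswap_ne (hJ Eswap (𝟙 Efun) h)
  push_neg at h2
  obtain ⟨G₂, hG₂, f₂, hf₂⟩ := h2
  have h3 : ¬ ∀ G ∈ J, ∀ h : G ⟶ Ifun, h ≫ Iswap = h ≫ 𝟙 Ifun :=
    fun h => Iswap_ne (hJ Iswap (𝟙 Ifun) h)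
  push_neg at h3
  obtain ⟨G₃, hG₃, f₃, hf₃⟩ := h3
  -- extracted structural facts
  have e1none : G₁.obj none → PEmpty := fun a => f₁.app none a
  have e2left : G₂.obj (some WalkingPair.left) → PEmpty := fun a => f₂.app (some WalkingPair.left) a
  have e2none : G₂.obj none → PEmpty := fun a => f₂.app none a
  have n1left : Nonempty (G₁.obj (some WalkingPair.left)) := by
    by_contra hne
    apply hf₁
    apply NatTrans.ext
    funext x; ext a
    match x with
    | none => exact (f₁.app none a).elim
    | some WalkingPair.left => exact absurd ⟨a⟩ hne
    | some WalkingPair.right => exact (f₁.app (some WalkingPair.right) a).elim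
  have n2right : Nonempty (G₂.obj (some WalkingPair.right)) := by
    by_contra hne
    apply hf₂
    apply NatTrans.ext
    funext x; ext a
    match x with
    | none => exact (f₂.app none a).elim
    | some WalkingPair.left => exact (f₂.app (some WalkingPair.left) a).elim
    | some WalkingPair.right => exact absurd ⟨a⟩ hne
  have n3none : Nonempty (G₃.obj none) := by
    by_contra hne
    apply hf₃
    apply NatTrans.ext
    funext x; ext a
    match x with
    | none => exact absurd ⟨a⟩ hne
    | some WalkingPair.left => exact Subsingleton.elim (α := PUnit) _ _
    | some WalkingPair.right => exact Subsingleton.elim (α := PUnit) _ _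
  refine ⟨G₁, hG₁, G₂, hG₂, G₃, hG₃, ?_, ?_, ?_⟩
  · rintro ⟨e⟩
    obtain ⟨a⟩ := n1left
    exact (e2left ((e.app (some WalkingPair.left)).hom a)).elim
  · rintro ⟨e⟩
    obtain ⟨a⟩ := n3none
    exact (e1none ((e.app none).inv a)).elim
  · rintro ⟨e⟩
    obtain ⟨a⟩ := n3none
    exact (e2none ((e.app none).inv a)).elim
end

section
/- There is no functor F : R → H from incidence hypergraphs to set-system hypergraphs whose object map is the incidence-forgetting construction F(G) = (Ě(G), ε, V̌(G)) with ε(e) = {v : ς⁻¹(v) ∩ ω⁻¹(e) ≠ ∅}: there exists a morphism φ : G → H in R such that no morphism F(G) → F(H) exists in H. -/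
open CategoryTheory

/-- An incidence hypergraph: vertex set, edge set, incidence set, with port map `ς`
and attachment map `ω`. -/
structure IncHyp : Type 1 where
  V : Type
  E : Type
  I : Type
  ς : I → V
  ω : I → E

/-- A morphism of incidence hypergraphs: vertex, edge, and incidence maps commuting
with the port and attachment maps. -/
structure IncHom (G H : IncHyp) where
  vmap : G.V → H.V
  emap : G.E → H.E
  imap : G.I → H.I
  comm_v : ∀ i, H.ς (imap i) = vmap (G.ς i)
  comm_e : ∀ i, H.ω (imap i) = emap (G.ω i)

theorem IncHom.ext' {G H : IncHyp} {f g : IncHom G H}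
    (hv : f.vmap = g.vmap) (he : f.emap = g.emap) (hi : f.imap = g.imap) : f = g := by
  cases f; cases g; cases hv; cases he; cases hi; rfl

instance : Category IncHyp where
  Hom := IncHom
  id G := ⟨id, id, id, fun _ => rfl, fun _ => rfl⟩
  comp f g := ⟨g.vmap ∘ f.vmap, g.emap ∘ f.emap, g.imap ∘ f.imap,
    fun i => by simp [g.comm_v, f.comm_v],
    fun i => by simp [g.comm_e, f.comm_e]⟩
  id_comp f := IncHom.ext' rfl rfl rfl
  comp_id f := IncHom.ext' rfl rfl rfl
  assoc f g h := IncHom.ext' rfl rfl rfl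

/-- The incidence-forgetting construction on objects: the endpoint set of an edge is
the set of vertices sharing an incidence with it. -/
def Fobj (G : IncHyp) : SSHyp :=
  ⟨G.V, G.E, fun e => {v : G.V | ∃ i : G.I, G.ς i = v ∧ G.ω i = e}⟩

def Gone : IncHyp := ⟨Unit, Unit, Unit, fun _ => (), fun _ => ()⟩
def Htwo : IncHyp := ⟨Bool, Unit, Bool, id, fun _ => ()⟩

def phi : Gone ⟶ Htwo :=
  ⟨fun _ => false, fun _ => (), fun _ => false, fun _ => rfl, fun _ => rfl⟩

theorem key : IsEmpty (Fobj Gone ⟶ Fobj Htwo) := by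
  constructor
  intro f
  have h := f.comm ()
  have htrue : (true : Bool) ∈ (Fobj Htwo).ε (f.emap ()) := ⟨true, rfl, rfl⟩
  have hfalse : (false : Bool) ∈ (Fobj Htwo).ε (f.emap ()) := ⟨false, rfl, rfl⟩
  rw [h] at htrue hfalse
  obtain ⟨a, -, ha⟩ := htrue
  obtain ⟨b, -, hb⟩ := hfalse
  cases a; cases b
  exact Bool.noConfusion (ha.symm.trans hb)

/-- The incidence-forgetting construction is not functorial: there is a morphism
`φ : G ⟶ H` of incidence hypergraphs such that no morphism `F(G) ⟶ F(H)` of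
set-system hypergraphs exists; hence no functor has `Fobj` as its object map. -/
theorem incidence_forgetting_not_functorial :
    (∃ G H : IncHyp, ∃ _φ : G ⟶ H, IsEmpty (Fobj G ⟶ Fobj H)) ∧
      ¬ (∃ F : IncHyp ⥤ SSHyp, ∀ G, F.obj G = Fobj G) := by
  refine ⟨⟨Gone, Htwo, phi, key⟩, ?_⟩
  rintro ⟨F, hF⟩
  exact key.false (eqToHom (hF Gone).symm ≫ F.map phi ≫ eqToHom (hF Htwo))
end

section
/- The functor Υ : Q → R, sending a quiver (V, E, σ, τ) to the incidence hypergraph (V, V, E, σ, τ) (vertices and edges of the incidence hypergraph both equal V, incidences equal E), is a logical functor: for every quiver Q and incidence hypergraph G, the Frobenius morphism Υ^◇(Υ(Q) × G) → Q × Υ^◇(G) is an isomorphism, where Υ^◇ is the left adjoint of Υ given by the bipartite incidence digraph Υ^◇(G) = (V̌(G) ⊔ Ě(G), I(G), inl ∘ ς_G, inr ∘ ω_G). -/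
open CategoryTheory

/-- The (componentwise) binary product of quivers. -/
def prodQ (G H : Quiv') : Quiv' :=
  ⟨G.V × H.V, G.E × H.E, fun e => (G.s e.1, H.s e.2), fun e => (G.t e.1, H.t e.2)⟩

/-- The (componentwise) binary product of incidence hypergraphs. -/
def prodI (G H : IncHyp) : IncHyp :=
  ⟨G.V × H.V, G.E × H.E, G.I × H.I,
    fun i => (G.ς i.1, H.ς i.2), fun i => (G.ω i.1, H.ω i.2)⟩

/-- The functor `Υ : Q ⥤ R` sending a quiver `(V,E,σ,τ)` to the incidence
hypergraph `(V,V,E,σ,τ)`. -/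
def Ups : Quiv' ⥤ IncHyp where
  obj Q := ⟨Q.V, Q.V, Q.E, Q.s, Q.t⟩
  map f := ⟨f.vmap, f.vmap, f.emap, f.comm_s, f.comm_t⟩
  map_id Q := IncHom.ext' rfl rfl rfl
  map_comp f g := IncHom.ext' rfl rfl rfl

/-- The left adjoint `Υ^◇ : R ⥤ Q`, the bipartite incidence digraph:
vertices `V̌(G) ⊔ Ě(G)`, edges `I(G)`, source `inl ∘ ς`, target `inr ∘ ω`. -/
def UpsDmd : IncHyp ⥤ Quiv' where
  obj G := ⟨G.V ⊕ G.E, G.I, fun i => Sum.inl (G.ς i), fun i => Sum.inr (G.ω i)⟩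
  map f := ⟨Sum.map f.vmap f.emap, f.imap,
    fun i => by simp [f.comm_v], fun i => by simp [f.comm_e]⟩
  map_id G := QuivHom.ext' (by funext x; cases x <;> rfl) rfl
  map_comp f g := QuivHom.ext' (by funext x; cases x <;> rfl) rfl

/-- The Frobenius morphism `Υ^◇(Υ(Q) × G) ⟶ Q × Υ^◇(G)`. -/
def Frob (Q : Quiv') (G : IncHyp) :
    UpsDmd.obj (prodI (Ups.obj Q) G) ⟶ prodQ Q (UpsDmd.obj G) where
  vmap x := match x with
    | Sum.inl (q, v) => (q, Sum.inl v)
    | Sum.inr (q, e) => (q, Sum.inr e)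
  emap := id
  comm_s e := rfl
  comm_t e := rfl

def FrobInv (Q : Quiv') (G : IncHyp) :
    prodQ Q (UpsDmd.obj G) ⟶ UpsDmd.obj (prodI (Ups.obj Q) G) where
  vmap x := match x with
    | (q, Sum.inl v) => Sum.inl (q, v)
    | (q, Sum.inr e) => Sum.inr (q, e)
  emap := id
  comm_s e := rfl
  comm_t e := rfl

def upsAdj : UpsDmd ⊣ Ups :=
  Adjunction.mkOfHomEquiv
    { homEquiv := fun G Q =>
        { toFun := fun f =>
            ⟨fun v => f.vmap (Sum.inl v), fun e => f.vmap (Sum.inr e), f.emap,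
              fun i => f.comm_s i, fun i => f.comm_t i⟩
          invFun := fun f =>
            ⟨Sum.elim f.vmap f.emap, f.imap,
              fun i => f.comm_v i, fun i => f.comm_e i⟩
          left_inv := fun f => QuivHom.ext' (by funext x; cases x <;> rfl) rfl
          right_inv := fun f => IncHom.ext' rfl rfl rfl }
      homEquiv_naturality_left_symm := fun f g =>
        QuivHom.ext' (by funext x; cases x <;> rfl) rfl
      homEquiv_naturality_right := fun f g => IncHom.ext' rfl rfl rfl }

/-- `Υ` is logical: it is part of an adjunction `Υ^◇ ⊣ Υ`, and for every quiver `Q`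
and incidence hypergraph `G` the Frobenius morphism
`Υ^◇(Υ(Q) × G) ⟶ Q × Υ^◇(G)` is an isomorphism. -/
theorem upsilon_logical :
    Nonempty (UpsDmd ⊣ Ups) ∧ ∀ (Q : Quiv') (G : IncHyp), IsIso (Frob Q G) := by
  refine ⟨⟨upsAdj⟩, fun Q G => ⟨FrobInv Q G, ?_, ?_⟩⟩
  · exact QuivHom.ext' (by funext x; rcases x with ⟨q,v⟩|⟨q,e⟩ <;> rfl) rfl
  · exact QuivHom.ext' (by funext x; rcases x with ⟨q,v|e⟩ <;> rfl) rfl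
end

section
/- For every quiver Q there is a natural isomorphism Υ^◇(Υ(Q)) ≅ Q × P⃗₁ in the category of quivers, where P⃗₁ = E^◇({1}) is the directed path of length 1. Consequently Υ^⋆(Υ(Q)) ≅ Q^{P⃗₁}, the exponential by P⃗₁. -/
open CategoryTheory

/-- The right adjoint `Υ^⋆ : R ⥤ Q`:
`Υ^⋆(G) = (V̌(G) × Ě(G), V̌(G) × I(G) × Ě(G))` with `σ(v,i,e) = (ς(i), e)` and
`τ(v,i,e) = (v, ω(i))`. -/
def UpsStar : IncHyp ⥤ Quiv' where
  obj G := ⟨G.V × G.E, G.V × G.I × G.E,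
    fun p => (G.ς p.2.1, p.2.2), fun p => (p.1, G.ω p.2.1)⟩
  map f := ⟨Prod.map f.vmap f.emap,
    fun p => (f.vmap p.1, f.imap p.2.1, f.emap p.2.2),
    fun p => by simp [f.comm_v], fun p => by simp [f.comm_e]⟩
  map_id G := QuivHom.ext' rfl rfl
  map_comp f g := QuivHom.ext' rfl rfl

/-- The product-with-`P⃗₁` endofunctor of the category of quivers. -/
def ProdP1Fun : Quiv' ⥤ Quiv' where
  obj Q := prodQ Q P1q
  map f := ⟨Prod.map f.vmap id, Prod.map f.emap id,
    fun e => Prod.ext (f.comm_s e.1) rfl, fun e => Prod.ext (f.comm_t e.1) rfl⟩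
  map_id Q := QuivHom.ext' rfl rfl
  map_comp f g := QuivHom.ext' rfl rfl

/-- The exponential-by-`P⃗₁` endofunctor `(-)^{P⃗₁}` of the category of quivers:
vertices of `Q^{P⃗₁}` are functions `V(P⃗₁) → V(Q)` and edges are incidence
hypergraph morphisms `Υ(P⃗₁) ⟶ Υ(Q)`, with source/target the vertex/edge
components. -/
def ExpP1Fun : Quiv' ⥤ Quiv' where
  obj Q := ⟨P1q.V → Q.V, Ups.obj P1q ⟶ Ups.obj Q,
    fun φ => φ.vmap, fun φ => φ.emap⟩
  map f := ⟨fun g => f.vmap ∘ g, fun φ => φ ≫ Ups.map f,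
    fun φ => rfl, fun φ => rfl⟩
  map_id Q := QuivHom.ext' rfl (by
    funext φ; show φ ≫ Ups.map (𝟙 Q) = φ
    rw [Ups.map_id]; exact Category.comp_id φ)
  map_comp f g := QuivHom.ext' rfl (by
    funext φ; show φ ≫ Ups.map (f ≫ g) = (φ ≫ Ups.map f) ≫ Ups.map g
    rw [Ups.map_comp, Category.assoc])

/-- For every quiver `Q` there is a natural isomorphism
`Υ^◇(Υ(Q)) ≅ Q × P⃗₁`; consequently `Υ^⋆(Υ(Q)) ≅ Q^{P⃗₁}` naturally. -/
theorem upsilon_composites :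
    Nonempty ((Ups ⋙ UpsDmd) ≅ ProdP1Fun) ∧
      Nonempty ((Ups ⋙ UpsStar) ≅ ExpP1Fun) := by
  constructor
  · exact ⟨NatIso.ofComponents (fun Q =>
      { hom := ⟨Sum.elim (fun v => (v, false)) (fun v => (v, true)),
          fun e => (e, PUnit.unit), fun e => rfl, fun e => rfl⟩
        inv := ⟨fun p => cond p.2 (Sum.inr p.1) (Sum.inl p.1),
          fun e => e.1, fun e => rfl, fun e => rfl⟩
        hom_inv_id := QuivHom.ext' (by funext x; cases x <;> rfl) rfl
        inv_hom_id := QuivHom.ext' (by funext ⟨v, b⟩; cases b <;> rfl)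
          (by funext ⟨e, u⟩; rfl) })
      (fun f => QuivHom.ext' (by funext x; cases x <;> rfl) rfl)⟩
  · refine ⟨NatIso.ofComponents (fun Q =>
      { hom := ⟨fun p => fun b => cond b p.2 p.1,
          fun t => ⟨fun b => cond b t.2.2 (Q.s t.2.1),
            fun b => cond b (Q.t t.2.1) t.1,
            fun _ => t.2.1,
            fun _ => rfl, fun _ => rfl⟩,
          fun t => by funext b; cases b <;> rfl,
          fun t => by funext b; cases b <;> rfl⟩
        inv := ⟨fun g => (g false, g true),
          fun φ => (φ.emap false, φ.imap PUnit.unit, φ.vmap true),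
          fun φ => by
            show (Q.s (φ.imap PUnit.unit), φ.vmap true) = (φ.vmap false, φ.vmap true)
            rw [show Q.s (φ.imap PUnit.unit) = φ.vmap false from φ.comm_v PUnit.unit]
            rfl,
          fun φ => by
            show (φ.emap false, Q.t (φ.imap PUnit.unit)) = (φ.emap false, φ.emap true)
            rw [show Q.t (φ.imap PUnit.unit) = φ.emap true from φ.comm_e PUnit.unit]
            rfl⟩
        hom_inv_id := QuivHom.ext' rfl rfl
        inv_hom_id := QuivHom.ext' (by funext g; funext b; cases b <;> rfl)
          (by
            funext φ
            refine IncHom.ext' ?_ ?_ ?_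
            · funext b; cases b
              · exact φ.comm_v PUnit.unit
              · rfl
            · funext b; cases b
              · rfl
              · exact φ.comm_e PUnit.unit
            · funext u; cases u; rfl) })
      (fun f => QuivHom.ext' (by funext p; funext b; cases b <;> rfl)
        (by
          funext t
          refine IncHom.ext' ?_ ?_ ?_
          · funext b; cases b
            · exact f.comm_s t.2.1
            · rfl
          · funext b; cases b
            · rfl
            · exact f.comm_t t.2.1
          · rfl))⟩
end

section
/- For quivers Q, R, the quiver with vertex set Set(V(Q), V(R)), edge set R-hom(Υ(Q), Υ(R)) (morphisms of incidence hypergraphs), source map φ ↦ V̌(φ) and target map φ ↦ Ě(φ), together with the evaluation morphism ε : Q × R^Q → R given on vertices by (v,f) ↦ f(v) and on edges by (e,φ) ↦ I(φ)(e), is an exponential object in the category of quivers: for every ψ : Q × K → R there is a unique ψ̂ : K → R^Q with ε ∘ (Q × ψ̂) = ψ. -/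
open CategoryTheory

/-- The quiver exponential `R^Q`: vertices are functions `V(Q) → V(R)`, edges are
incidence hypergraph morphisms `Υ(Q) ⟶ Υ(R)`, with source `φ ↦ V̌(φ)` and target
`φ ↦ Ě(φ)`. -/
def ExpObj (Q R : Quiv') : Quiv' :=
  ⟨Q.V → R.V, Ups.obj Q ⟶ Ups.obj R, fun φ => φ.vmap, fun φ => φ.emap⟩

/-- The evaluation morphism `ε : Q × R^Q ⟶ R`: on vertices `(v,f) ↦ f(v)`, on edges
`(e,φ) ↦ I(φ)(e)`. -/
def evalMor (Q R : Quiv') : prodQ Q (ExpObj Q R) ⟶ R where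
  vmap p := p.2 p.1
  emap p := p.2.imap p.1
  comm_s p := p.2.comm_v p.1
  comm_t p := p.2.comm_e p.1

/-- The morphism `Q × f : Q × K ⟶ Q × L` induced on componentwise products. -/
def idProd (Q : Quiv') {K L : Quiv'} (f : K ⟶ L) : prodQ Q K ⟶ prodQ Q L :=
  ⟨Prod.map id f.vmap, Prod.map id f.emap,
    fun e => congrArg (Prod.mk (Q.s e.1)) (f.comm_s e.2),
    fun e => congrArg (Prod.mk (Q.t e.1)) (f.comm_t e.2)⟩

/-- The quiver `R^Q` together with the evaluation morphism is an exponential object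
in the category of quivers: every `ψ : Q × K ⟶ R` factors uniquely as
`ε ∘ (Q × ψ̂)` for a unique `ψ̂ : K ⟶ R^Q`. -/
theorem quiver_exponential (Q R K : Quiv') (ψ : prodQ Q K ⟶ R) :
    ∃! ψh : K ⟶ ExpObj Q R, idProd Q ψh ≫ evalMor Q R = ψ := by
  refine ⟨⟨fun k v => ψ.vmap (v, k),
    fun e => ⟨fun v => ψ.vmap (v, K.s e), fun v => ψ.vmap (v, K.t e),
      fun q => ψ.emap (q, e),
      fun q => ψ.comm_s (q, e), fun q => ψ.comm_t (q, e)⟩,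
    fun _ => rfl, fun _ => rfl⟩, ?_, ?_⟩
  · exact QuivHom.ext' rfl rfl
  · rintro g rfl
    refine QuivHom.ext' rfl ?_
    funext e
    exact IncHom.ext' (funext fun v => congrFun (g.comm_s e) v)
      (funext fun v => congrFun (g.comm_t e) v) rfl
end
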